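/- arXiv:1906.09446 — 6 statements merged into one kernel-verified Lean document; each statement's English description precedes it below -/
import Mathlib

section
/- Let H be a complex Hilbert space and T a bounded linear operator on H such that ‖I + K‖ = ‖T + K‖ for every compact operator K on H. Then T = I. -/
/-!
Testing the hypothesis with `K = 0` gives `‖T‖ ≤ 1`. For a vector `x`, let `P` be the orthogonal
projection onto `ℂ ∙ x`; since `1 - 2P` is minus a reflection, testing with the rank-one
`K = -2P` gives `‖T - 2P‖ ≤ 1`. So `T x` lies in the closed balls of radius `‖x‖` about `0` and
about `2x`, which in a strictly convex space meet only at `x`.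
-/

open ContinuousLinearMap Submodule

lemma eq_of_norm_le_of_norm_sub_two_smul_le {E : Type*} [NormedAddCommGroup E] [NormedSpace ℝ E]
    [StrictConvexSpace ℝ E] {x y : E} (hy : ‖y‖ ≤ ‖x‖) (hy' : ‖y - 2 • x‖ ≤ ‖x‖) : y = x := by
  set z := 2 • x - y
  have hz : ‖z‖ ≤ ‖x‖ := by rw [norm_sub_rev]; exact hy'
  have hyz : ‖y + z‖ = 2 * ‖x‖ := by
    rw [add_sub_cancel, ← ofNat_smul_eq_nsmul ℝ, norm_smul, Real.norm_ofNat]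
  have hyz_le : 2 * ‖x‖ ≤ ‖y‖ + ‖z‖ := hyz ▸ norm_add_le y z
  have hyz_eq : y = 2 • x - y := eq_of_norm_eq_of_norm_add_eq (by linarith) (by linarith)
  rw [eq_sub_iff_add_eq, ← two_nsmul] at hyz_eq
  exact smul_right_injective E (two_ne_zero (α := ℝ)) (by simpa only [ofNat_smul_eq_nsmul])

section Projection

variable {𝕜 E : Type*} [RCLike 𝕜] [NormedAddCommGroup E] [InnerProductSpace 𝕜 E]
  (K : Submodule 𝕜 E)

lemma isCompactOperator_starProjection [FiniteDimensional 𝕜 K] :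
    IsCompactOperator K.starProjection :=
  (isCompactOperator_of_locallyCompactSpace_dom K.orthogonalProjectionOnto).clm_comp K.subtypeL

lemma norm_one_sub_two_smul_starProjection_le [K.HasOrthogonalProjection] :
    ‖1 - 2 • K.starProjection‖ ≤ 1 :=
  opNorm_le_bound _ zero_le_one fun y => by
    have : ‖K.reflection y‖ = ‖y‖ := K.reflection.norm_map y
    rw [reflection_apply, norm_sub_rev] at this
    simp [this]

end Projection

theorem stmt0_general {H : Type*} [NormedAddCommGroup H] [InnerProductSpace ℂ H]
    (T : H →L[ℂ] H)
    (h : ∀ K : H →L[ℂ] H, IsCompactOperator (⇑K) → ‖(1 : H →L[ℂ] H) + K‖ = ‖T + K‖) :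
    T = 1 := by
  have hT : ‖T‖ ≤ 1 := by
    have h0 := h 0 isCompactOperator_zero
    rw [add_zero, add_zero] at h0
    exact h0 ▸ norm_id_le
  ext x
  set P := (ℂ ∙ x).starProjection
  have hP : IsCompactOperator ⇑(-(2 • P)) := by
    rw [FunLike.coe_neg, FunLike.coe_smul]
    exact ((isCompactOperator_starProjection (ℂ ∙ x)).smul 2).neg
  have hTP : ‖T - 2 • P‖ ≤ 1 := by
    rw [sub_eq_add_neg, ← h _ hP, ← sub_eq_add_neg]
    exact norm_one_sub_two_smul_starProjection_le _
  have hPx : P x = x := starProjection_eq_self_iff.mpr (mem_span_singleton_self x)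
  have : StrictConvexSpace ℝ H := by
    let _ := InnerProductSpace.rclikeToReal ℂ H
    infer_instance
  apply eq_of_norm_le_of_norm_sub_two_smul_le
  · simpa using T.le_of_opNorm_le hT x
  · simpa [hPx] using (T - 2 • P).le_of_opNorm_le hTP x

/-- If `T` is a bounded operator on a complex Hilbert space such that
`‖I + K‖ = ‖T + K‖` for every compact operator `K`, then `T = I`. -/
theorem stmt0 {H : Type*} [NormedAddCommGroup H] [InnerProductSpace ℂ H] [CompleteSpace H]
    (T : H →L[ℂ] H)
    (h : ∀ K : H →L[ℂ] H, IsCompactOperator (⇑K) → ‖(1 : H →L[ℂ] H) + K‖ = ‖T + K‖) :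
    T = 1 :=
  stmt0_general T h
end

section
/- Let H be a complex Hilbert space, x a unit vector, P = x ⊗ x the rank-one orthogonal projection onto the span of x, and T a bounded operator with ‖T‖ = 1 and ‖T + P‖ = 2. Then Tx = x. -/
/-!
Write `y = c x + w` with `c = ⟪x, y⟫` and `w ⊥ x`. Then `(T + P) y = T y + c x` has norm at most
`1 + ‖c‖`, so a unit vector `y` with `‖(T + P) y‖` close to `2` has `‖c‖` close to `1` and hence
`‖w‖` small; and `(T + P) y = c (T x + x) + T w` then forces `‖T x + x‖` close to `2`.
Thus `‖T x + x‖ = 2 = ‖T x‖ + ‖x‖`, and strict convexity of the Hilbert norm gives `T x = x`.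
-/

open RCLike

theorem eq_of_norm_le_of_two_mul_norm_le_norm_add {E : Type*} [NormedAddCommGroup E]
    [NormedSpace ℝ E] [StrictConvexSpace ℝ E] {u v : E} (hu : ‖u‖ ≤ ‖v‖)
    (huv : 2 * ‖v‖ ≤ ‖u + v‖) : u = v := by
  have hle := norm_add_le u v
  exact eq_of_norm_eq_of_norm_add_eq (by linarith) (by linarith)

theorem min_le_of_le_add_of_sq_le {d u s : ℝ} (hs : 0 ≤ s) (hsu : s ^ 2 ≤ 2 * u)
    (hd : d ≤ u + s) : min (d / 2) (d ^ 2 / 8) ≤ u := by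
  by_cases hu : d / 2 ≤ u
  · exact (min_le_left _ _).trans hu
  · refine (min_le_right _ _).trans ?_
    nlinarith

section RankOnePerturbation

variable {𝕜 E : Type*} [RCLike 𝕜] [NormedAddCommGroup E] [InnerProductSpace 𝕜 E]

local notation "⟪" a ", " b "⟫" => inner 𝕜 a b

variable {x : E} {T : E →L[𝕜] E} {y : E}

theorem norm_sub_inner_smul_sq (hx : ‖x‖ = 1) :
    ‖y - ⟪x, y⟫ • x‖ ^ 2 = ‖y‖ ^ 2 - ‖⟪x, y⟫‖ ^ 2 := by
  have hre : re ⟪y, ⟪x, y⟫ • x⟫ = ‖⟪x, y⟫‖ ^ 2 := by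
    rw [inner_smul_right, ← inner_conj_symm y x, RCLike.mul_conj, ← ofReal_pow, ofReal_re]
  rw [norm_sub_sq (𝕜 := 𝕜), hre, norm_smul, hx, mul_one]
  ring

theorem norm_sub_inner_smul_sq_le_two_mul (hx : ‖x‖ = 1) (hT : ‖T‖ ≤ 1) (hy : ‖y‖ ≤ 1) :
    ‖y - ⟪x, y⟫ • x‖ ^ 2 ≤ 2 * (2 - ‖T y + ⟪x, y⟫ • x‖) := by
  have hTy : ‖T y‖ ≤ 1 := (T.le_opNorm y).trans (mul_le_one₀ hT (norm_nonneg y) hy)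
  have hc : ‖⟪x, y⟫‖ ≤ 1 := (norm_inner_le_norm x y).trans (by rw [hx, one_mul]; exact hy)
  have hsum : ‖T y + ⟪x, y⟫ • x‖ ≤ 1 + ‖⟪x, y⟫‖ := by
    refine (norm_add_le _ _).trans ?_
    rw [norm_smul, hx, mul_one]
    linarith
  rw [norm_sub_inner_smul_sq hx]
  nlinarith [norm_nonneg ⟪x, y⟫, norm_nonneg y]

theorem norm_apply_add_inner_smul_le (hx : ‖x‖ = 1) (hT : ‖T‖ ≤ 1) (hy : ‖y‖ ≤ 1) :
    ‖T y + ⟪x, y⟫ • x‖ ≤ ‖T x + x‖ + ‖y - ⟪x, y⟫ • x‖ := by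
  have hc : ‖⟪x, y⟫‖ ≤ 1 := (norm_inner_le_norm x y).trans (by rw [hx, one_mul]; exact hy)
  have hdecomp : T y + ⟪x, y⟫ • x = ⟪x, y⟫ • (T x + x) + T (y - ⟪x, y⟫ • x) := by
    rw [map_sub, map_smul, smul_add]
    abel
  calc ‖T y + ⟪x, y⟫ • x‖
      ≤ ‖⟪x, y⟫‖ * ‖T x + x‖ + ‖T‖ * ‖y - ⟪x, y⟫ • x‖ := by
        rw [hdecomp, ← norm_smul]
        exact norm_add_le_of_le le_rfl (T.le_opNorm _)
    _ ≤ ‖T x + x‖ + ‖y - ⟪x, y⟫ • x‖ := by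
        gcongr
        · exact mul_le_of_le_one_left (norm_nonneg _) hc
        · exact mul_le_of_le_one_left (norm_nonneg _) hT

theorem norm_add_smulRight_innerSL_le (hx : ‖x‖ = 1) (hT : ‖T‖ ≤ 1) :
    ‖T + (innerSL 𝕜 x).smulRight x‖ ≤
      2 - min ((2 - ‖T x + x‖) / 2) ((2 - ‖T x + x‖) ^ 2 / 8) := by
  have hmin : min ((2 - ‖T x + x‖) / 2) ((2 - ‖T x + x‖) ^ 2 / 8) ≤ 2 := by
    linarith [min_le_left ((2 - ‖T x + x‖) / 2) ((2 - ‖T x + x‖) ^ 2 / 8), norm_nonneg (T x + x)]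
  refine ContinuousLinearMap.opNorm_le_of_unit_norm (by linarith) fun y hy => ?_
  simp only [add_apply, ContinuousLinearMap.smulRight_apply, innerSL_apply_apply]
  have hN := norm_apply_add_inner_smul_le hx hT hy.le
  have := min_le_of_le_add_of_sq_le (d := 2 - ‖T x + x‖) (norm_nonneg _)
    (norm_sub_inner_smul_sq_le_two_mul hx hT hy.le) (by linarith)
  linarith

end RankOnePerturbation

theorem stmt1_general {H : Type*} [NormedAddCommGroup H] [InnerProductSpace ℂ H]
    (x : H) (hx : ‖x‖ = 1) (T : H →L[ℂ] H) (hT : ‖T‖ = 1)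
    (hTP : ‖T + (innerSL ℂ x).smulRight x‖ = 2) :
    T x = x := by
  have : StrictConvexSpace ℝ H := by
    let := InnerProductSpace.rclikeToReal ℂ H
    infer_instance
  have hTx : ‖T x‖ ≤ ‖x‖ := by simpa [hT] using T.le_opNorm x
  refine eq_of_norm_le_of_two_mul_norm_le_norm_add hTx ?_
  have hbound := norm_add_smulRight_innerSL_le hx hT.le
  rw [hTP] at hbound
  rw [hx, mul_one]
  by_contra! hlt
  have hm : 0 < min ((2 - ‖T x + x‖) / 2) ((2 - ‖T x + x‖) ^ 2 / 8) :=
    lt_min (by linarith) (by nlinarith)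
  linarith

/-- If `x` is a unit vector, `P = x ⊗ x` the rank-one projection onto `ℂx`,
and `T` is bounded with `‖T‖ = 1` and `‖T + P‖ = 2`, then `T x = x`. -/
theorem stmt1 {H : Type*} [NormedAddCommGroup H] [InnerProductSpace ℂ H] [CompleteSpace H]
    (x : H) (hx : ‖x‖ = 1) (T : H →L[ℂ] H) (hT : ‖T‖ = 1)
    (hTP : ‖T + (innerSL ℂ x).smulRight x‖ = 2) :
    T x = x :=
  stmt1_general x hx T hT hTP
end

section
/- Let H be a complex Hilbert space, S ∈ B(H), and P a rank-one projection. Suppose φ(P)S = x⊗x, Sφ(P) = y⊗y and φ(P)² = z⊗z for unit vectors x, y, z and some operator φ(P), where S² = I. Then Sy = α y for some α ∈ {1, −1}, and φ(P) = α (y ⊗ y); in particular φ(P) is a rank-one projection or its negative. -/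
/-!
Since `S` is an involution, `T = S (y ⊗ y) = (S y) ⊗ y`, so `T² = β • (S y) ⊗ y` with
`β = ⟪y, S y⟫`. Comparing with the projection `z ⊗ z` forces `β • S y = y`; applying `S` gives
`S y = β • y`, and then `y = β² • y` gives `β = ±1`.
-/

open InnerProductSpace ContinuousLinearMap

section RankOne

variable {𝕜 E : Type*} [RCLike 𝕜] [NormedAddCommGroup E] [InnerProductSpace 𝕜 E]

theorem eq_of_rankOne_eq_rankOne_self {a y z : E} (hy : ‖y‖ = 1) (hz : ‖z‖ = 1)
    (h : rankOne 𝕜 a y = rankOne 𝕜 z z) : a = y := by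
  have inner_self_of_norm_eq_one {v : E} (hv : ‖v‖ = 1) : inner 𝕜 v v = 1 := by
    rw [inner_self_eq_norm_sq_to_K, hv]; simp
  set c : 𝕜 := inner 𝕜 a z
  have hzy : z = c • y := by
    have h' := DFunLike.congr_fun (rankOne_eq_rankOne_iff_comm.mp h) z
    rw [rankOne_apply, rankOne_apply, inner_self_of_norm_eq_one hz, one_smul] at h'
    exact h'.symm
  have hc : starRingEnd 𝕜 c * c = 1 := by
    have hnorm : ‖c‖ = 1 := by rwa [hzy, norm_smul, hy, mul_one] at hz
    rw [RCLike.conj_mul, hnorm]; simp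
  have hzz : rankOne 𝕜 z z = rankOne 𝕜 y y := by
    rw [hzy, map_smulₛₗ, map_smul, smul_apply, smul_smul, hc, one_smul]
  have h' := DFunLike.congr_fun (h.trans hzz) y
  rwa [rankOne_apply, rankOne_apply, inner_self_of_norm_eq_one hy, one_smul, one_smul] at h'

theorem eq_rankOne_of_comp_eq_rankOne {S T : E →L[𝕜] E} (hS : S ∘L S = 1) {u v : E}
    (h : S ∘L T = rankOne 𝕜 u v) : T = rankOne 𝕜 (S u) v := by
  rw [← comp_rankOne, ← h, ← comp_assoc, hS, one_def, id_comp]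

end RankOne

theorem stmt12_general {H : Type*} [NormedAddCommGroup H] [InnerProductSpace ℂ H]
    (S T : H →L[ℂ] H) (hS : S ∘L S = 1)
    (y z : H) (hy : ‖y‖ = 1) (hz : ‖z‖ = 1)
    (h2 : S ∘L T = (innerSL ℂ y).smulRight y)
    (h3 : T ∘L T = (innerSL ℂ z).smulRight z) :
    ∃ α : ℂ, (α = 1 ∨ α = -1) ∧ S y = α • y ∧ T = α • (innerSL ℂ y).smulRight y := by
  have hSS (w : H) : S (S w) = w := by simpa using DFunLike.congr_fun hS w
  have hT : T = rankOne ℂ (S y) y := eq_rankOne_of_comp_eq_rankOne hS h2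
  set β : ℂ := inner ℂ y (S y)
  have hβSy : β • S y = y := by
    refine eq_of_rankOne_eq_rankOne_self (𝕜 := ℂ) hy hz ?_
    rw [map_smul, smul_apply, ← rankOne_comp_rankOne, ← hT]
    exact h3
  have hSy : S y = β • y := by simpa only [map_smul, hSS] using (congrArg S hβSy).symm
  have hβ : β * β = 1 := by
    have hy0 : y ≠ 0 := norm_ne_zero_iff.mp (by rw [hy]; exact one_ne_zero)
    refine smul_left_injective ℂ hy0 ?_
    simp only [← smul_smul, ← hSy, hβSy, one_smul]
  refine ⟨β, mul_self_eq_one_iff.mp hβ, hSy, ?_⟩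
  rw [hT, hSy, map_smul, smul_apply, rankOne_def]

/-- If `S² = I` and `T` satisfies `T S = x⊗x`, `S T = y⊗y`, `T² = z⊗z` with unit
vectors `x, y, z`, then `S y = α • y` with `α ∈ {1, -1}` and `T = α • (y ⊗ y)`;
in particular `T` is a rank-one projection or its negative. -/
theorem stmt12 {H : Type*} [NormedAddCommGroup H] [InnerProductSpace ℂ H] [CompleteSpace H]
    (S T : H →L[ℂ] H) (hS : S ∘L S = 1)
    (x y z : H) (hx : ‖x‖ = 1) (hy : ‖y‖ = 1) (hz : ‖z‖ = 1)
    (h1 : T ∘L S = (innerSL ℂ x).smulRight x)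
    (h2 : S ∘L T = (innerSL ℂ y).smulRight y)
    (h3 : T ∘L T = (innerSL ℂ z).smulRight z) :
    ∃ α : ℂ, (α = 1 ∨ α = -1) ∧ S y = α • y ∧ T = α • (innerSL ℂ y).smulRight y :=
  stmt12_general S T hS y z hy hz h2 h3
end

section
/- Let H be a complex Hilbert space and let T, T₁, T₂, S ∈ B(H) with S² = I, T S = T₁, S T = T₂, where T₁, T₂ are self-adjoint. If T² is self-adjoint, then T₁ and T₂ commute and S commutes with T². -/
/-- If `S² = I`, `T S = T₁`, `S T = T₂` with `T₁, T₂` self-adjoint, and `T²` is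
self-adjoint, then `T₁` and `T₂` commute and `S` commutes with `T²`. -/
theorem stmt13 {H : Type*} [NormedAddCommGroup H] [InnerProductSpace ℂ H] [CompleteSpace H]
    (S T T₁ T₂ : H →L[ℂ] H) (hS : S * S = 1)
    (h1 : T * S = T₁) (h2 : S * T = T₂)
    (h1sa : IsSelfAdjoint T₁) (h2sa : IsSelfAdjoint T₂)
    (hT2 : IsSelfAdjoint (T * T)) :
    T₁ * T₂ = T₂ * T₁ ∧ S * (T * T) = (T * T) * S := by
  have e1 : T₁ * T₂ = T * T := by
    rw [← h1, ← h2, mul_assoc, ← mul_assoc S S, hS, one_mul]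
  have e2 : T₂ * T₁ = T * T := by
    calc T₂ * T₁ = star (T₁ * T₂) := by
          rw [star_mul, h1sa.star_eq, h2sa.star_eq]
      _ = star (T * T) := by rw [e1]
      _ = T * T := hT2.star_eq
  refine ⟨e1.trans e2.symm, ?_⟩
  calc S * (T * T) = S * (T₂ * T₁) := by rw [e2]
    _ = S * ((S * T) * (T * S)) := by rw [h1, h2]
    _ = (S * S) * (T * (T * S)) := by simp [mul_assoc]
    _ = (T * T) * S := by rw [hS, one_mul, mul_assoc]
end

section
/- Let H be a complex Hilbert space, B a positive compact self-adjoint operator with largest eigenvalue λ₁ = ‖B‖ > 0 and eigenspace M₁ for λ₁, and let U, V be unitary operators with B² = U B U* V B V*. Then for every unit vector x ∈ M₁ one has ‖B V* x‖ = ‖B‖ = ‖B U* x‖, and hence V* x ∈ M₁ and U* x ∈ M₁. -/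
/-!
If `‖T v‖ = ‖T‖ ‖v‖` for a symmetric `T`, expanding `‖T² v - ‖T‖² v‖²` shows `T² v = ‖T‖² v`;
when `T` is moreover positive, `T v - ‖T‖ v` is an eigenvector for `-‖T‖`, hence zero. So the
top eigenspace of a positive `B` consists of the vectors on which `B` attains its norm.
For `x` in it, `‖B‖² ‖x‖ = ‖B² x‖ = ‖B U* (V B V* x)‖ ≤ ‖B‖ ‖B V* x‖`, so `B` attains its norm
at `V* x`. Then `V B V* x = ‖B‖ x`, and `B² x = ‖B‖ U B U* x` gives `B U* x = ‖B‖ U* x`.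
-/

universe u v

section

open ContinuousLinearMap RCLike
open scoped InnerProductSpace

variable {𝕜 : Type u} {E : Type v} [RCLike 𝕜] [NormedAddCommGroup E] [InnerProductSpace 𝕜 E]

namespace LinearMap.IsSymmetric

theorem apply_apply_eq_of_norm_apply_eq {T : E →L[𝕜] E} (hT : T.IsSymmetric) {v : E}
    (hv : ‖T v‖ = ‖T‖ * ‖v‖) : T (T v) = ((‖T‖ : 𝕜) ^ 2) • v := by
  set c := ‖T‖
  have hre : re ⟪T (T v), ((c : 𝕜) ^ 2) • v⟫_𝕜 = c ^ 2 * ‖T v‖ ^ 2 := by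
    rw [← ofReal_pow, inner_smul_real_right, smul_re,
      show ⟪T (T v), v⟫_𝕜 = ⟪T v, T v⟫_𝕜 from hT (T v) v, inner_self_eq_norm_sq]
  have hsmul : ‖((c : 𝕜) ^ 2) • v‖ = c ^ 2 * ‖v‖ := by
    rw [norm_smul, norm_pow, norm_ofReal, abs_norm]
  have hle : ‖T (T v)‖ ≤ c ^ 2 * ‖v‖ := by
    calc ‖T (T v)‖ ≤ c * ‖T v‖ := T.le_opNorm _
      _ = c ^ 2 * ‖v‖ := by rw [hv]; ring
  have hsq : ‖T (T v) - ((c : 𝕜) ^ 2) • v‖ ^ 2 ≤ 0 := by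
    rw [@norm_sub_sq 𝕜, hre, hsmul, hv]
    nlinarith [norm_nonneg (T (T v)), norm_nonneg v, norm_nonneg T]
  exact sub_eq_zero.mp <| norm_eq_zero.mp <| by
    nlinarith [norm_nonneg (T (T v) - ((c : 𝕜) ^ 2) • v)]

end LinearMap.IsSymmetric

namespace ContinuousLinearMap.IsPositive

theorem apply_eq_of_apply_apply_eq {B : E →L[𝕜] E} (hB : B.IsPositive) {c : ℝ} (hc : 0 < c)
    {v : E} (h : B (B v) = ((c : 𝕜) ^ 2) • v) : B v = (c : 𝕜) • v := by
  set u := B v - (c : 𝕜) • v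
  have hBu : B u = ((-c : ℝ) : 𝕜) • u := by
    simp only [u, map_sub, map_smul, h, ofReal_neg]
    module
  have hnonneg := hB.re_inner_nonneg_left u
  rw [hBu, inner_smul_real_left, smul_re, inner_self_eq_norm_sq] at hnonneg
  have hu : ‖u‖ ^ 2 ≤ 0 := by nlinarith
  exact sub_eq_zero.mp (norm_eq_zero.mp (by nlinarith [norm_nonneg u]))

theorem apply_eq_opNorm_smul_of_norm_apply_eq {B : E →L[𝕜] E} (hB : B.IsPositive)
    (hB₀ : 0 < ‖B‖) {v : E} (hv : ‖B v‖ = ‖B‖ * ‖v‖) : B v = (‖B‖ : 𝕜) • v :=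
  hB.apply_eq_of_apply_apply_eq hB₀ (hB.isSymmetric.apply_apply_eq_of_norm_apply_eq hv)

end ContinuousLinearMap.IsPositive

theorem mem_ker_sub_smul_one_iff {T : E →L[𝕜] E} {μ : 𝕜} {x : E} :
    x ∈ LinearMap.ker ((T - μ • (1 : E →L[𝕜] E) : E →L[𝕜] E) : E →ₗ[𝕜] E) ↔ T x = μ • x := by
  simp [sub_eq_zero]

variable [CompleteSpace E]

theorem ContinuousLinearMap.apply_star_apply_of_mem_unitary {U : E →L[𝕜] E}
    (hU : U ∈ unitary (E →L[𝕜] E)) (x : E) : U (star U x) = x :=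
  congr($(Unitary.mul_star_self_of_mem hU) x)

theorem ContinuousLinearMap.star_apply_apply_of_mem_unitary {U : E →L[𝕜] E}
    (hU : U ∈ unitary (E →L[𝕜] E)) (x : E) : star U (U x) = x :=
  congr($(Unitary.star_mul_self_of_mem hU) x)

theorem ContinuousLinearMap.IsPositive.apply_star_apply_eq_opNorm_smul_of_mul_self_eq
    {B U V : E →L[𝕜] E} (hB : B.IsPositive) (hB₀ : 0 < ‖B‖)
    (hU : U ∈ unitary (E →L[𝕜] E)) (hV : V ∈ unitary (E →L[𝕜] E))
    (heq : B * B = U * B * star U * (V * B * star V)) {x : E} (hx : B x = (‖B‖ : 𝕜) • x) :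
    B (star V x) = (‖B‖ : 𝕜) • star V x ∧ B (star U x) = (‖B‖ : 𝕜) • star U x := by
  have hBBx : B (B x) = U (B (star U (V (B (star V x))))) := congr($heq x)
  have hnorm : ‖B (star V x)‖ = ‖B‖ * ‖star V x‖ := by
    refine le_antisymm (B.le_opNorm _) (le_of_mul_le_mul_left ?_ hB₀)
    calc ‖B‖ * (‖B‖ * ‖star V x‖) = ‖B (B x)‖ := by
          rw [hx, map_smul, hx, smul_smul, norm_smul, norm_mul, norm_ofReal, abs_norm,
            norm_map_of_mem_unitary (Unitary.star_mem hV), mul_assoc]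
      _ = ‖B (star U (V (B (star V x))))‖ := by rw [hBBx, norm_map_of_mem_unitary hU]
      _ ≤ ‖B‖ * ‖B (star V x)‖ := by
          grw [B.le_opNorm, norm_map_of_mem_unitary (Unitary.star_mem hU),
            norm_map_of_mem_unitary hV]
  have hBVx := hB.apply_eq_opNorm_smul_of_norm_apply_eq hB₀ hnorm
  refine ⟨hBVx, ?_⟩
  have hUBUx : U (B (star U x)) = (‖B‖ : 𝕜) • x := by
    refine smul_right_injective E (ofReal_ne_zero (K := 𝕜) |>.mpr hB₀.ne') ?_
    calc (‖B‖ : 𝕜) • U (B (star U x)) = U (B (star U (V (B (star V x))))) := by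
          rw [hBVx, map_smul, apply_star_apply_of_mem_unitary hV, map_smul, map_smul, map_smul]
      _ = (‖B‖ : 𝕜) • (‖B‖ : 𝕜) • x := by rw [← hBBx, hx, map_smul, hx]
  rw [← map_smul, ← hUBUx, star_apply_apply_of_mem_unitary hU]

end

theorem stmt14_general {H : Type*} [NormedAddCommGroup H] [InnerProductSpace ℂ H] [CompleteSpace H]
    (B U V : H →L[ℂ] H)
    (hBpos : B.IsPositive)
    (hBnorm : 0 < ‖B‖)
    (hU : U ∈ unitary (H →L[ℂ] H)) (hV : V ∈ unitary (H →L[ℂ] H))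
    (heq : B * B = U * B * star U * (V * B * star V)) :
    ∀ x : H, ‖x‖ = 1 → x ∈ LinearMap.ker ((B - (‖B‖ : ℂ) • (1 : H →L[ℂ] H) : H →L[ℂ] H) : H →ₗ[ℂ] H) →
      ‖B ((star V) x)‖ = ‖B‖ ∧ ‖B ((star U) x)‖ = ‖B‖ ∧
      (star V) x ∈ LinearMap.ker ((B - (‖B‖ : ℂ) • (1 : H →L[ℂ] H) : H →L[ℂ] H) : H →ₗ[ℂ] H) ∧
      (star U) x ∈ LinearMap.ker ((B - (‖B‖ : ℂ) • (1 : H →L[ℂ] H) : H →L[ℂ] H) : H →ₗ[ℂ] H) := by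
  intro x hx hxM
  simp only [mem_ker_sub_smul_one_iff] at hxM ⊢
  obtain ⟨hVx, hUx⟩ := hBpos.apply_star_apply_eq_opNorm_smul_of_mul_self_eq hBnorm hU hV heq hxM
  have norm_apply_star_apply {W : H →L[ℂ] H} (hW : W ∈ unitary (H →L[ℂ] H))
      (hWx : B (star W x) = (‖B‖ : ℂ) • star W x) : ‖B (star W x)‖ = ‖B‖ := by
    rw [hWx, norm_smul, Complex.norm_real, norm_norm,
      ContinuousLinearMap.norm_map_of_mem_unitary (Unitary.star_mem hW), hx, mul_one]
  exact ⟨norm_apply_star_apply hV hVx, norm_apply_star_apply hU hUx, hVx, hUx⟩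

/-- Let `B` be a compact positive self-adjoint operator with `‖B‖ > 0`, top
eigenspace `M₁ = ker (B - ‖B‖•I)`, and `U, V` unitaries with
`B² = U B U* V B V*`. Then for every unit vector `x ∈ M₁`,
`‖B V* x‖ = ‖B‖ = ‖B U* x‖` and `V* x, U* x ∈ M₁`. -/
theorem stmt14 {H : Type*} [NormedAddCommGroup H] [InnerProductSpace ℂ H] [CompleteSpace H]
    (B U V : H →L[ℂ] H)
    (hBc : IsCompactOperator (⇑B)) (hBsa : IsSelfAdjoint B) (hBpos : B.IsPositive)
    (hBnorm : 0 < ‖B‖)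
    (hU : U ∈ unitary (H →L[ℂ] H)) (hV : V ∈ unitary (H →L[ℂ] H))
    (heq : B * B = U * B * star U * (V * B * star V)) :
    ∀ x : H, ‖x‖ = 1 → x ∈ LinearMap.ker ((B - (‖B‖ : ℂ) • (1 : H →L[ℂ] H) : H →L[ℂ] H) : H →ₗ[ℂ] H) →
      ‖B ((star V) x)‖ = ‖B‖ ∧ ‖B ((star U) x)‖ = ‖B‖ ∧
      (star V) x ∈ LinearMap.ker ((B - (‖B‖ : ℂ) • (1 : H →L[ℂ] H) : H →L[ℂ] H) : H →ₗ[ℂ] H) ∧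
      (star U) x ∈ LinearMap.ker ((B - (‖B‖ : ℂ) • (1 : H →L[ℂ] H) : H →L[ℂ] H) : H →ₗ[ℂ] H) :=
  stmt14_general B U V hBpos hBnorm hU hV heq
end

section
/- Let φ : B(H) → B(H) satisfy: for all A, B there exists a unitary U with φ(A)φ(B) = U(AB)U*. If P₁, P₂ are non-orthogonal rank-one projections (tr(P₁P₂) > 0) and Q₁, Q₂ are rank-one projections with φ(P₁) = Q₁ and φ(P₂) = −Q₂, then a contradiction follows; hence φ cannot send one non-orthogonal rank-one projection to a projection and another to the negative of a projection. -/
/-!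
`U x₁` is an eigenvector of `U P₁ P₂ U* = -Q₁ Q₂` with eigenvalue `|⟪x₁, x₂⟫|² > 0`. But a
product of two rank-one operators has at most one nonzero eigenvalue, and for `Q₁ Q₂` it is
`|⟪y₁, y₂⟫|² ≥ 0`, so `-|⟪x₁, x₂⟫|²` cannot be an eigenvalue of `Q₁ Q₂`.
-/

open InnerProductSpace Module.End

section RankOne

variable {𝕜 E : Type*} [RCLike 𝕜] [NormedAddCommGroup E] [InnerProductSpace 𝕜 E]

lemma inner_mul_inner_swap_eq_norm_sq (x y : E) :
    ⟪x, y⟫_𝕜 * ⟪y, x⟫_𝕜 = (‖⟪x, y⟫_𝕜‖ ^ 2 : ℝ) := by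
  rw [← inner_conj_symm y x, RCLike.mul_conj, RCLike.ofReal_pow]

lemma rankOne_mul_rankOne_apply (a b c d v : E) :
    (rankOne 𝕜 a b * rankOne 𝕜 c d) v = (⟪d, v⟫_𝕜 * ⟪b, c⟫_𝕜) • a := by
  simp only [mul_apply_eq_comp, rankOne_apply, inner_smul_right]

lemma hasEigenvalue_rankOne_mul_rankOne {a : E} (ha : a ≠ 0) (b c d : E) :
    HasEigenvalue ((rankOne 𝕜 a b * rankOne 𝕜 c d : E →L[𝕜] E) : E →ₗ[𝕜] E)
      (⟪b, c⟫_𝕜 * ⟪d, a⟫_𝕜) := by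
  refine hasEigenvalue_of_hasEigenvector ⟨mem_eigenspace_iff.mpr ?_, ha⟩
  rw [ContinuousLinearMap.coe_coe, rankOne_mul_rankOne_apply, mul_comm]

lemma eq_zero_or_eq_of_hasEigenvalue_rankOne_mul_rankOne {a b c d : E} {μ : 𝕜}
    (h : HasEigenvalue ((rankOne 𝕜 a b * rankOne 𝕜 c d : E →L[𝕜] E) : E →ₗ[𝕜] E) μ) :
    μ = 0 ∨ μ = ⟪b, c⟫_𝕜 * ⟪d, a⟫_𝕜 := by
  obtain ⟨v, hv⟩ := h.exists_hasEigenvector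
  have hμv : (⟪d, v⟫_𝕜 * ⟪b, c⟫_𝕜) • a = μ • v := by
    rw [← rankOne_mul_rankOne_apply]
    exact hv.apply_eq_smul
  by_cases hdv : ⟪d, v⟫_𝕜 = 0
  · rw [hdv, zero_mul, zero_smul, eq_comm, smul_eq_zero] at hμv
    exact .inl (hμv.resolve_right hv.2)
  · have hinner := congrArg (inner 𝕜 d) hμv
    rw [inner_smul_right, inner_smul_right, mul_assoc, mul_comm μ] at hinner
    exact .inr (mul_left_cancel₀ hdv hinner).symm

lemma Module.End.HasEigenvalue.unitary_conj [CompleteSpace E] {T U : E →L[𝕜] E} {μ : 𝕜}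
    (hU : U ∈ unitary (E →L[𝕜] E)) (h : HasEigenvalue (T : E →ₗ[𝕜] E) μ) :
    HasEigenvalue ((U * T * star U : E →L[𝕜] E) : E →ₗ[𝕜] E) μ := by
  obtain ⟨v, hv⟩ := h.exists_hasEigenvector
  have hUv : star U (U v) = v := by
    rw [← mul_apply_eq_comp, Unitary.star_mul_self_of_mem hU, one_apply_eq_self]
  refine hasEigenvalue_of_hasEigenvector (x := U v) ⟨mem_eigenspace_iff.mpr ?_, fun h0 => hv.2 ?_⟩
  · simp only [ContinuousLinearMap.coe_coe, mul_apply_eq_comp, hUv]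
    rw [← ContinuousLinearMap.coe_coe T, hv.apply_eq_smul, map_smul]
  · rw [← hUv, h0, map_zero]

end RankOne

theorem stmt19_general {H : Type*} [NormedAddCommGroup H] [InnerProductSpace ℂ H] [CompleteSpace H]
    (φ : (H →L[ℂ] H) → (H →L[ℂ] H))
    (hφ : ∀ A B : H →L[ℂ] H, ∃ U : H →L[ℂ] H,
      U ∈ unitary (H →L[ℂ] H) ∧ φ A * φ B = U * (A * B) * star U)
    (x₁ x₂ y₁ y₂ : H) (hx₁ : ‖x₁‖ = 1)
    (horth : (inner ℂ x₁ x₂ : ℂ) ≠ 0)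
    (h1 : φ ((innerSL ℂ x₁).smulRight x₁) = (innerSL ℂ y₁).smulRight y₁)
    (h2 : φ ((innerSL ℂ x₂).smulRight x₂) = -((innerSL ℂ y₂).smulRight y₂)) :
    False := by
  simp only [← rankOne_def] at h1 h2
  obtain ⟨U, hU, hprod⟩ := hφ (rankOne ℂ x₁ x₁) (rankOne ℂ x₂ x₂)
  have hx₁0 : x₁ ≠ 0 := by rintro rfl; simp at hx₁
  have heig := (hasEigenvalue_rankOne_mul_rankOne hx₁0 x₁ x₂ x₂).unitary_conj hU
  rw [← hprod, h1, h2, mul_neg, ContinuousLinearMap.toLinearMap_neg, hasEigenvalue_neg_iff,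
    inner_mul_inner_swap_eq_norm_sq, ← RCLike.ofReal_neg] at heig
  have hpos : 0 < ‖⟪x₁, x₂⟫_ℂ‖ ^ 2 := by positivity
  rcases eq_zero_or_eq_of_hasEigenvalue_rankOne_mul_rankOne heig with h | h
  · rw [RCLike.ofReal_eq_zero] at h
    linarith
  · rw [inner_mul_inner_swap_eq_norm_sq, RCLike.ofReal_inj] at h
    linarith [sq_nonneg ‖⟪y₁, y₂⟫_ℂ‖]

/-- If for all `A, B` there is a unitary `U` with `φ(A)φ(B) = U (AB) U*`, then `φ`
cannot send one of two non-orthogonal rank-one projections to a rank-one projection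
and the other to the negative of a rank-one projection. -/
theorem stmt19 {H : Type*} [NormedAddCommGroup H] [InnerProductSpace ℂ H] [CompleteSpace H]
    (φ : (H →L[ℂ] H) → (H →L[ℂ] H))
    (hφ : ∀ A B : H →L[ℂ] H, ∃ U : H →L[ℂ] H,
      U ∈ unitary (H →L[ℂ] H) ∧ φ A * φ B = U * (A * B) * star U)
    (x₁ x₂ y₁ y₂ : H) (hx₁ : ‖x₁‖ = 1) (hx₂ : ‖x₂‖ = 1)
    (hy₁ : ‖y₁‖ = 1) (hy₂ : ‖y₂‖ = 1)
    (horth : (inner ℂ x₁ x₂ : ℂ) ≠ 0)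
    (h1 : φ ((innerSL ℂ x₁).smulRight x₁) = (innerSL ℂ y₁).smulRight y₁)
    (h2 : φ ((innerSL ℂ x₂).smulRight x₂) = -((innerSL ℂ y₂).smulRight y₂)) :
    False :=
  stmt19_general φ hφ x₁ x₂ y₁ y₂ hx₁ horth h1 h2
end
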